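/- The class of Ext-algebras satisfying a fixed set E of profinite equations u = v (u, v in the completion of WM(A)) is a pseudo-variety: it is closed under sub-Ext-algebras, quotients, and finite direct products; conversely, every pseudo-variety of finite Ext-algebras is defined by the set of all equations it satisfies (Reiterman's theorem for Ext-algebras). -/

import Mathlib

inductive VPKind : Type
  | call | ret | intern
deriving DecidableEq

class VPAlphabet (A : Type) where
  kind : A → VPKind

variable {A : Type} [VPAlphabet A]

inductive WellMatched : List A → Prop
  | nil : WellMatched []
  | intern (c : A) (hc : VPAlphabet.kind c = VPKind.intern) : WellMatched [c]
  | ext (a b : A) (w : List A) (ha : VPAlphabet.kind a = VPKind.call)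
      (hb : VPAlphabet.kind b = VPKind.ret) (hw : WellMatched w) :
      WellMatched (a :: w ++ [b])
  | append (u v : List A) (hu : WellMatched u) (hv : WellMatched v) : WellMatched (u ++ v)

theorem wm_insert {u v x : List A} (h : WellMatched (u ++ v)) (hx : WellMatched x) :
    WellMatched (u ++ x ++ v) := by
  suffices H : ∀ w, WellMatched w → ∀ u' v' : List A, w = u' ++ v' →
      WellMatched (u' ++ x ++ v') from H _ h u v rfl
  intro w hw
  induction hw with
  | nil =>
    intro u' v' huv
    obtain ⟨rfl, rfl⟩ := List.append_eq_nil_iff.mp huv.symm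
    simpa using hx
  | intern c hc =>
    intro u' v' huv
    rcases u' with _ | ⟨a, u''⟩
    · simp only [List.nil_append] at huv
      subst huv
      simpa using WellMatched.append x [c] hx (WellMatched.intern c hc)
    · have h1 : c = a := by injection huv
      have h2 : ([] : List A) = u'' ++ v' := by injection huv
      obtain ⟨rfl, rfl⟩ := List.append_eq_nil_iff.mp h2.symm
      subst h1
      simpa using WellMatched.append [c] x (WellMatched.intern c hc) hx
  | ext a b w' ha hb hw' ih =>
    intro u' v' huv
    rcases u' with _ | ⟨a'', u''⟩
    · simp only [List.nil_append] at huv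
      subst huv
      simpa using WellMatched.append x _ hx (WellMatched.ext a b w' ha hb hw')
    · have h1 : a = a'' := by injection huv
      have huv2 : w' ++ [b] = u'' ++ v' := by injection huv
      subst h1
      rcases List.eq_nil_or_concat v' with rfl | ⟨v'', b'', rfl⟩
      · have h3 : u'' = w' ++ [b] := by simpa using huv2.symm
        subst h3
        simpa using WellMatched.append _ x (WellMatched.ext a b w' ha hb hw') hx
      · have h4 : w' = u'' ++ v'' ∧ [b] = [b''] :=
          List.append_inj' (by simpa [List.append_assoc] using huv2) rfl
        obtain ⟨rfl, hb'⟩ := h4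
        have hbb : b = b'' := by injection hb'
        subst hbb
        have := WellMatched.ext a b _ ha hb (ih u'' v'' rfl)
        simpa [List.append_assoc] using this
  | append w₁ w₂ h₁ h₂ ih₁ ih₂ =>
    intro u' v' huv
    rcases List.append_eq_append_iff.mp huv with ⟨a', rfl, rfl⟩ | ⟨c', rfl, rfl⟩
    · have := WellMatched.append _ _ h₁ (ih₂ a' v' rfl)
      simpa [List.append_assoc] using this
    · have := WellMatched.append _ _ (ih₁ u' c' rfl) h₂
      simpa [List.append_assoc] using this

def WM (A : Type) [VPAlphabet A] : Type := {w : List A // WellMatched w}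

instance : Monoid (WM A) where
  one := ⟨[], WellMatched.nil⟩
  mul u v := ⟨u.1 ++ v.1, WellMatched.append _ _ u.2 v.2⟩
  mul_assoc a b c := Subtype.ext (List.append_assoc _ _ _)
  one_mul a := Subtype.ext (List.nil_append _)
  mul_one a := Subtype.ext (List.append_nil _)

@[simp] theorem WM.mul_val (x y : WM A) : (x * y).1 = x.1 ++ y.1 := rfl
@[simp] theorem WM.one_val : (1 : WM A).1 = [] := rfl

instance : Nonempty (WM A) := ⟨1⟩

def extWord (u v : List A) (h : WellMatched (u ++ v)) (x : WM A) : WM A :=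
  ⟨u ++ x.1 ++ v, wm_insert h x.2⟩

@[simp] theorem extWord_val (u v : List A) (h : WellMatched (u ++ v)) (x : WM A) :
    (extWord u v h x).1 = u ++ x.1 ++ v := rfl

structure ExtAlgebra (R : Type*) [Monoid R] where
  O : Submonoid (Function.End R)
  mulLeft_mem : ∀ r : R, (fun x => r * x) ∈ O
  mulRight_mem : ∀ r : R, (fun x => x * r) ∈ O

structure ExtAlgHom {R S : Type*} [Monoid R] [Monoid S]
    (ER : ExtAlgebra R) (ES : ExtAlgebra S) where
  toMonoidHom : R →* S
  opMap : ER.O →* ES.O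
  compat : ∀ (e : ER.O) (r : R),
    (opMap e : Function.End S) (toMonoidHom r) = toMonoidHom ((e : Function.End R) r)

/-- A morphism of `Ext`-algebras from the free `Ext`-algebra of well-matched words
into an `Ext`-algebra `R`, given by its monoid part and by the images of the
operations `ext_{u,v}`. -/
structure ExtHomWM (A : Type) [VPAlphabet A] {R : Type*} [Monoid R] (ER : ExtAlgebra R) where
  toMonoidHom : WM A →* R
  op : ∀ u v : List A, WellMatched (u ++ v) → ER.O
  op_one : op [] [] WellMatched.nil = 1
  op_comp : ∀ u v (h : WellMatched (u ++ v)) u' v' (h' : WellMatched (u' ++ v'))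
      (h'' : WellMatched ((u ++ u') ++ (v' ++ v))),
      op (u ++ u') (v' ++ v) h'' = op u v h * op u' v' h'
  op_spec : ∀ u v (h : WellMatched (u ++ v)) (x : WM A),
      (op u v h : Function.End R) (toMonoidHom x) = toMonoidHom (extWord u v h x)

/-- `R` recognises `L` via the morphism `φ` when `L` is the preimage of its image. -/
def Recognises {R : Type*} [Monoid R] {ER : ExtAlgebra R}
    (φ : ExtHomWM A ER) (L : Set (WM A)) : Prop :=
  L = φ.toMonoidHom ⁻¹' (φ.toMonoidHom '' L)

/-- The free `Ext`-algebra structure on the monoid of well-matched words. -/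
def freeExt (A : Type) [VPAlphabet A] : ExtAlgebra (WM A) where
  O :=
    { carrier := {e | ∃ u v, ∃ h : WellMatched (u ++ v), ∀ x : WM A, e x = extWord u v h x}
      one_mem' := ⟨[], [], WellMatched.nil, fun x => Subtype.ext (by show x.1 = [] ++ x.1 ++ []; simp)⟩
      mul_mem' := by
        rintro e f ⟨u, v, h, he⟩ ⟨u', v', h', hf⟩
        have h'' : WellMatched ((u ++ u') ++ (v' ++ v)) := by
          simpa [List.append_assoc] using wm_insert h h'
        exact ⟨u ++ u', v' ++ v, h'', fun x => by
          rw [show (e * f) x = e (f x) from rfl, hf, he]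
          exact Subtype.ext (by simp [List.append_assoc])⟩ }
  mulLeft_mem r := ⟨r.1, [], by simpa using r.2, fun x => Subtype.ext (by simp)⟩
  mulRight_mem r := ⟨[], r.1, by simpa using r.2, fun x => Subtype.ext (by simp)⟩

/-- A sub-`Ext`-algebra of an `Ext`-algebra. -/
structure SubExt {S : Type*} [Monoid S] (ES : ExtAlgebra S) where
  carrier : Submonoid S
  ops : Submonoid (Function.End S)
  ops_le : ops ≤ ES.O
  maps_to : ∀ e ∈ ops, ∀ x ∈ carrier, e x ∈ carrier
  mulLeft_mem : ∀ r ∈ carrier, (fun x => r * x) ∈ ops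
  mulRight_mem : ∀ r ∈ carrier, (fun x => x * r) ∈ ops

/-- The `Ext`-algebra structure induced on a sub-`Ext`-algebra. -/
def SubExt.toExtAlgebra {S : Type*} [Monoid S] {ES : ExtAlgebra S} (T : SubExt ES) :
    ExtAlgebra T.carrier where
  O :=
    { carrier := {e : Function.End T.carrier | ∃ f ∈ T.ops, ∀ x : T.carrier, (e x : S) = f x}
      one_mem' := ⟨1, T.ops.one_mem, fun _ => rfl⟩
      mul_mem' := by
        rintro e e' ⟨f, hf, he⟩ ⟨f', hf', he'⟩
        exact ⟨f * f', mul_mem hf hf', fun x => by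
          rw [show (e * e') x = e (e' x) from rfl, show (f * f') (x : S) = f (f' x) from rfl,
            ← he', he]⟩ }
  mulLeft_mem r := ⟨fun x => (r : S) * x, T.mulLeft_mem r r.2, fun _ => rfl⟩
  mulRight_mem r := ⟨fun x => x * (r : S), T.mulRight_mem r r.2, fun _ => rfl⟩

/-- `ER` is a quotient of `ES` if there is a surjective morphism of `Ext`-algebras
from `ES` onto `ER`. -/
def IsQuotientOf {R S : Type*} [Monoid R] [Monoid S]
    (ER : ExtAlgebra R) (ES : ExtAlgebra S) : Prop :=
  ∃ h : ExtAlgHom ES ER, Function.Surjective h.toMonoidHom ∧ Function.Surjective h.opMap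

/-- Bundled finite `Ext`-algebras. -/
structure BExt : Type 1 where
  carrier : Type
  [mon : Monoid carrier]
  [fin : Finite carrier]
  ext : ExtAlgebra carrier

attribute [instance] BExt.mon BExt.fin

section ListTake

variable {B : Type*}

theorem take_take_append (N k : ℕ) (hk : k ≤ N) (x v : List B) :
    ((x.take N) ++ v).take k = (x ++ v).take k := by
  rw [List.take_append, List.take_append, List.take_take,
    List.length_take]
  rw [min_eq_left hk]
  congr 2
  omega

theorem take_mid (N : ℕ) (u s v : List B) :
    (u ++ s.take N ++ v).take N = (u ++ s ++ v).take N := by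
  conv_lhs => rw [List.append_assoc, List.take_append]
  conv_rhs => rw [List.append_assoc, List.take_append]
  congr 1
  exact take_take_append N _ (Nat.sub_le _ _) s v

theorem take_append_right (N : ℕ) (u s : List B) :
    (u ++ s.take N).take N = (u ++ s).take N := by
  have := take_mid N u s ([] : List B)
  simpa using this

end ListTake

/-- The monoid of words of length at most `N`, with truncated concatenation. -/
def TruncM (B : Type) (N : ℕ) : Type := {l : List B // l.length ≤ N}

instance {B : Type} {N : ℕ} : Monoid (TruncM B N) where
  one := ⟨[], by simp⟩
  mul u v := ⟨(u.1 ++ v.1).take N, by rw [List.length_take]; exact min_le_left _ _⟩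
  mul_assoc a b c := Subtype.ext (by
    show ((a.1 ++ b.1).take N ++ c.1).take N = (a.1 ++ (b.1 ++ c.1).take N).take N
    rw [take_take_append N N le_rfl, take_append_right, List.append_assoc])
  one_mul a := Subtype.ext (by
    show (([] : List B) ++ a.1).take N = a.1
    rw [List.nil_append]
    exact List.take_of_length_le a.2)
  mul_one a := Subtype.ext (by
    show (a.1 ++ ([] : List B)).take N = a.1
    rw [List.append_nil]
    exact List.take_of_length_le a.2)

@[simp] theorem TruncM.one_val {B : Type} {N : ℕ} : (1 : TruncM B N).1 = [] := rfl
@[simp] theorem TruncM.mul_val {B : Type} {N : ℕ} (u v : TruncM B N) :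
    (u * v).1 = (u.1 ++ v.1).take N := rfl

instance {B : Type} [Finite B] {N : ℕ} : Finite (TruncM B N) := by
  haveI : Finite (Option B) := Finite.of_equiv (B ⊕ (PUnit : Type)) (Equiv.optionEquivSumPUnit B).symm
  refine Finite.of_injective
    (fun l : TruncM B N => fun i : Fin (N + 1) => l.1[(i : ℕ)]?) ?_
  intro a b hab
  apply Subtype.ext
  apply List.ext_getElem?
  intro i
  by_cases hi : i < N + 1
  · exact congrFun hab ⟨i, hi⟩
  · have ha := a.2
    have hb := b.2
    rw [List.getElem?_eq_none (by omega), List.getElem?_eq_none (by omega)]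

/-- Truncation is a monoid morphism on well-matched words. -/
def truncMonoidHom (A : Type) [VPAlphabet A] (N : ℕ) : WM A →* TruncM A N where
  toFun w := ⟨w.1.take N, by rw [List.length_take]; exact min_le_left _ _⟩
  map_one' := Subtype.ext (by simp)
  map_mul' u v := Subtype.ext (by
    show (u.1 ++ v.1).take N = (u.1.take N ++ v.1.take N).take N
    rw [take_take_append N N le_rfl, take_append_right])

/-- The truncation monoid as an `Ext`-algebra with all functions as operations. -/
def truncExt (A : Type) [VPAlphabet A] (N : ℕ) : ExtAlgebra (TruncM A N) where
  O := ⊤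
  mulLeft_mem _ := trivial
  mulRight_mem _ := trivial

def truncOp {A : Type} [VPAlphabet A] {N : ℕ} (u v : List A) : Function.End (TruncM A N) :=
  fun m => ⟨(u ++ m.1 ++ v).take N, by rw [List.length_take]; exact min_le_left _ _⟩

/-- The truncation morphism of `Ext`-algebras. -/
def truncExtHom (A : Type) [VPAlphabet A] (N : ℕ) : ExtHomWM A (truncExt A N) where
  toMonoidHom := truncMonoidHom A N
  op u v _ := ⟨truncOp u v, trivial⟩
  op_one := by
    apply Subtype.ext
    funext m
    apply Subtype.ext
    show (([] : List A) ++ m.1 ++ []).take N = m.1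
    simpa using List.take_of_length_le m.2
  op_comp u v h u' v' h' h'' := by
    apply Subtype.ext
    funext m
    apply Subtype.ext
    show ((u ++ u') ++ m.1 ++ (v' ++ v)).take N = (u ++ ((u' ++ m.1 ++ v').take N) ++ v).take N
    rw [take_mid]
    simp [List.append_assoc]
  op_spec u v h x := by
    apply Subtype.ext
    show (u ++ (x.1.take N) ++ v).take N = (u ++ x.1 ++ v).take N
    exact take_mid N u x.1 v

/-- `x` and `y` can be separated by a finite `Ext`-algebra of cardinality at most `n`. -/
def SepBound (n : ℕ) (x y : WM A) : Prop :=
  ∃ (R : BExt) (φ : ExtHomWM A R.ext),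
    Nat.card R.carrier ≤ n ∧ φ.toMonoidHom x ≠ φ.toMonoidHom y

/-- The minimal cardinality of a finite `Ext`-algebra separating `x` and `y`. -/
noncomputable def sepDeg (x y : WM A) : ℕ := sInf {n | SepBound n x y}

/-- The profinite (ultra)metric on well-matched words. -/
noncomputable def pdist (x y : WM A) : ℝ :=
  open scoped Classical in if x = y then 0 else (2 : ℝ)⁻¹ ^ sepDeg x y

theorem pdist_nonneg (x y : WM A) : 0 ≤ pdist x y := by
  unfold pdist
  split
  · exact le_rfl
  · positivity

theorem sepBound_comm {n : ℕ} {x y : WM A} : SepBound n x y ↔ SepBound n y x := by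
  constructor <;> rintro ⟨R, φ, h1, h2⟩ <;> exact ⟨R, φ, h1, h2.symm⟩

theorem pdist_comm (x y : WM A) : pdist x y = pdist y x := by
  have h1 : sepDeg x y = sepDeg y x := by
    unfold sepDeg
    congr 1
    ext n
    exact sepBound_comm
  rcases eq_or_ne x y with rfl | h
  · rfl
  · unfold pdist
    rw [if_neg h, if_neg (Ne.symm h), h1]

theorem exists_sepBound [Finite A] {x y : WM A} (hxy : x ≠ y) : ∃ n, SepBound n x y := by
  classical
  set N := max x.1.length y.1.length with hN
  refine ⟨Nat.card (TruncM A N),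
    { carrier := TruncM A N, ext := truncExt A N }, truncExtHom A N, le_rfl, ?_⟩
  intro hcontra
  have hv : x.1.take N = y.1.take N := congrArg Subtype.val hcontra
  rw [List.take_of_length_le (le_max_left _ _ : x.1.length ≤ N),
    List.take_of_length_le (le_max_right _ _ : y.1.length ≤ N)] at hv
  exact hxy (Subtype.ext hv)

theorem pdist_ultra [Finite A] (x y z : WM A) :
    pdist x z ≤ max (pdist x y) (pdist y z) := by
  rcases eq_or_ne x z with rfl | hxz
  · calc pdist x x = 0 := by simp [pdist]
      _ ≤ _ := le_max_of_le_left (pdist_nonneg _ _)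
  rcases eq_or_ne x y with rfl | hxy
  · exact le_max_of_le_right le_rfl
  rcases eq_or_ne y z with rfl | hyz
  · exact le_max_of_le_left le_rfl
  have hSne : {n | SepBound n x z}.Nonempty := exists_sepBound hxz
  obtain ⟨R, φ, hcard, hne⟩ := Nat.sInf_mem hSne
  by_cases hxy' : φ.toMonoidHom x = φ.toMonoidHom y
  · have hb : SepBound (sepDeg x z) y z := ⟨R, φ, hcard, by rw [← hxy']; exact hne⟩
    have hle : sepDeg y z ≤ sepDeg x z := Nat.sInf_le hb
    calc pdist x z = (2 : ℝ)⁻¹ ^ sepDeg x z := by rw [pdist, if_neg hxz]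
      _ ≤ (2 : ℝ)⁻¹ ^ sepDeg y z := pow_le_pow_of_le_one (by norm_num) (by norm_num) hle
      _ = pdist y z := by rw [pdist, if_neg hyz]
      _ ≤ _ := le_max_right _ _
  · have hb : SepBound (sepDeg x z) x y := ⟨R, φ, hcard, hxy'⟩
    have hle : sepDeg x y ≤ sepDeg x z := Nat.sInf_le hb
    calc pdist x z = (2 : ℝ)⁻¹ ^ sepDeg x z := by rw [pdist, if_neg hxz]
      _ ≤ (2 : ℝ)⁻¹ ^ sepDeg x y := pow_le_pow_of_le_one (by norm_num) (by norm_num) hle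
      _ = pdist x y := by rw [pdist, if_neg hxy]
      _ ≤ _ := le_max_left _ _

noncomputable instance WM.metricSpace [Finite A] : MetricSpace (WM A) where
  dist := pdist
  dist_self x := by simp [pdist]
  dist_comm := pdist_comm
  dist_triangle x y z := by
    refine (pdist_ultra x y z).trans (max_le ?_ ?_)
    · exact le_add_of_nonneg_right (pdist_nonneg _ _)
    · exact le_add_of_nonneg_left (pdist_nonneg _ _)
  eq_of_dist_eq_zero := by
    intro x y h
    by_contra hxy
    have h' : pdist x y = 0 := h
    rw [pdist, if_neg hxy] at h'
    exact absurd h' (ne_of_gt (pow_pos (by norm_num) _))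

/-! ### Direct products of Ext-algebras -/

def prodGens {R S : Type*} [Monoid R] [Monoid S] (ER : ExtAlgebra R) (ES : ExtAlgebra S) :
    Set (Function.End (R × S)) :=
  {e | ∃ f ∈ ER.O, ∀ p : R × S, e p = (f p.1, p.2)} ∪
    {e | ∃ g ∈ ES.O, ∀ p : R × S, e p = (p.1, g p.2)}

def prodExt {R S : Type*} [Monoid R] [Monoid S] (ER : ExtAlgebra R) (ES : ExtAlgebra S) :
    ExtAlgebra (R × S) where
  O := Submonoid.closure (prodGens ER ES)
  mulLeft_mem := by
    intro r
    let f : Function.End (R × S) := fun p => (r.1 * p.1, p.2)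
    let g : Function.End (R × S) := fun p => (p.1, r.2 * p.2)
    have h1 : f ∈ Submonoid.closure (prodGens ER ES) :=
      Submonoid.subset_closure
        (Or.inl ⟨fun x => r.1 * x, ER.mulLeft_mem r.1, fun p => rfl⟩)
    have h2 : g ∈ Submonoid.closure (prodGens ER ES) :=
      Submonoid.subset_closure
        (Or.inr ⟨fun x => r.2 * x, ES.mulLeft_mem r.2, fun p => rfl⟩)
    have he : ((fun p => r * p) : Function.End (R × S)) = f * g := by
      funext p
      rfl
    rw [he]
    exact mul_mem h1 h2
  mulRight_mem := by
    intro r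
    let f : Function.End (R × S) := fun p => (p.1 * r.1, p.2)
    let g : Function.End (R × S) := fun p => (p.1, p.2 * r.2)
    have h1 : f ∈ Submonoid.closure (prodGens ER ES) :=
      Submonoid.subset_closure
        (Or.inl ⟨fun x => x * r.1, ER.mulRight_mem r.1, fun p => rfl⟩)
    have h2 : g ∈ Submonoid.closure (prodGens ER ES) :=
      Submonoid.subset_closure
        (Or.inr ⟨fun x => x * r.2, ES.mulRight_mem r.2, fun p => rfl⟩)
    have he : ((fun p => p * r) : Function.End (R × S)) = f * g := by
      funext p
      rfl
    rw [he]
    exact mul_mem h1 h2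

/-! ### Pseudo-varieties -/

/-- The trivial `Ext`-algebra. -/
def punitExt : ExtAlgebra PUnit where
  O := ⊤
  mulLeft_mem _ := trivial
  mulRight_mem _ := trivial

/-- A pseudo-variety of finite `Ext`-algebras. -/
structure AlgVariety where
  mem : BExt → Prop
  punit_mem : mem { carrier := PUnit, ext := punitExt }
  quot_closed : ∀ R S : BExt, mem S → IsQuotientOf R.ext S.ext → mem R
  sub_closed : ∀ (S : BExt) (T : SubExt S.ext),
    mem S → mem { carrier := T.carrier, ext := T.toExtAlgebra }
  prod_closed : ∀ R S : BExt,
    mem R → mem S → mem { carrier := R.carrier × S.carrier, ext := prodExt R.ext S.ext }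


open UniformSpace in
/-- A family of profinite equations, one set for each visibly pushdown alphabet. -/
structure EqSet : Type 1 where
  eqs : ∀ (B : Type) [VPAlphabet B] [Finite B],
    Set (Completion (WM B) × Completion (WM B))

open UniformSpace in
/-- A finite `Ext`-algebra satisfies an equation `u = v` when every continuous
extension of every morphism from `WM(B)` identifies `u` and `v`. -/
def SatisfiesEqs (R : BExt) (E : EqSet) : Prop :=
  ∀ (B : Type) [VPAlphabet B] [Finite B], ∀ p ∈ E.eqs B,
    ∀ (φ : ExtHomWM B R.ext) (ψ : Completion (WM B) → R.carrier),
      (@Continuous _ _ _ ⊥ ψ ∧ ∀ x : WM B, ψ ↑x = φ.toMonoidHom x) →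
      ψ p.1 = ψ p.2


/-!
Every morphism from `WM A` to a finite `Ext`-algebra `R` is locally constant for the profinite
metric, so it has a unique continuous extension to the completion. Since `WM A` is free on its
internal letters and (call, return) pairs, morphisms can be pushed through quotients, inclusions
and projections, which gives the closure properties.

Conversely, let `R` satisfy every equation of the pseudo-variety `V`, and present `R` by a
morphism `φ₀` that is onto, on elements and on operations. Words not separated by algebras with
at most `n` elements fall into finitely many classes, so the completion is compact. The pairs of
profinite words separated by `φ₀` then form a compact set, covered by the open sets of pairs
separated by members of `V`; this cover is directed (take products), so a single `S ∈ V` with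
`φ : WM B → S` separates all of them. Hence `φ₀` factors through the image of `φ`, and `R` is a
quotient of a sub-`Ext`-algebra of `S`.
-/

@[elab_as_elim]
theorem WellMatched.context_induction {motive : List A → List A → Prop}
    (nil : motive [] [])
    (append_left : ∀ w u v, WellMatched w → motive u v → motive (w ++ u) v)
    (append_right : ∀ u v w, WellMatched w → motive u v → motive u (v ++ w))
    (wrap : ∀ a b u v, VPAlphabet.kind a = VPKind.call → VPAlphabet.kind b = VPKind.ret →
      motive u v → motive (a :: u) (v ++ [b]))
    {u v : List A} (h : WellMatched (u ++ v)) : motive u v := by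
  have whole_left : ∀ w, WellMatched w → motive w [] := fun w hw => by
    simpa using append_left w [] [] hw nil
  have whole_right : ∀ w, WellMatched w → motive [] w := fun w hw => by
    simpa using append_right [] [] w hw nil
  generalize hw : u ++ v = w at h
  induction h generalizing u v with
  | nil => obtain ⟨rfl, rfl⟩ := List.append_eq_nil_iff.mp hw; exact nil
  | intern c hc =>
    rcases List.append_eq_singleton_iff.mp hw with ⟨rfl, rfl⟩ | ⟨rfl, rfl⟩
    · exact whole_right _ (.intern c hc)
    · exact whole_left _ (.intern c hc)
  | ext a b w ha hb hw' ih =>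
    rcases u with _ | ⟨a', u⟩
    · subst hw; exact whole_right _ (.ext a b w ha hb hw')
    simp only [List.cons_append, List.cons.injEq] at hw
    obtain ⟨rfl, hw⟩ := hw
    rcases List.eq_nil_or_concat' v with rfl | ⟨v, b', rfl⟩
    · rw [List.append_nil] at hw
      subst hw
      exact whole_left _ (.ext a' b w ha hb hw')
    · have hw : u ++ v ++ [b'] = w ++ [b] := by simpa using hw
      obtain ⟨huv, hb'⟩ := List.append_inj' hw rfl
      obtain rfl : b' = b := List.singleton_inj.mp hb'
      exact wrap a' b' u v ha hb (ih huv)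
  | append w₁ w₂ h₁ h₂ ih₁ ih₂ =>
    rcases List.append_eq_append_iff.mp hw with ⟨m, rfl, rfl⟩ | ⟨m, rfl, rfl⟩
    · exact append_right _ _ _ h₂ (ih₁ rfl)
    · exact append_left _ _ _ h₁ (ih₂ rfl)

@[elab_as_elim]
theorem WM.induction {motive : WM A → Prop} (one : motive 1)
    (intern : ∀ c (hc : VPAlphabet.kind c = VPKind.intern), motive ⟨[c], .intern c hc⟩)
    (ext : ∀ a b (ha : VPAlphabet.kind a = VPKind.call) (hb : VPAlphabet.kind b = VPKind.ret) x,
      motive x → motive (extWord [a] [b] (.ext a b [] ha hb .nil) x))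
    (mul : ∀ x y, motive x → motive y → motive (x * y)) (x : WM A) : motive x := by
  obtain ⟨w, hw⟩ := x
  induction hw with
  | nil => exact one
  | intern c hc => exact intern c hc
  | ext a b w ha hb hw ih => exact ext a b ha hb ⟨w, hw⟩ ih
  | append u v hu hv ihu ihv => exact mul ⟨u, hu⟩ ⟨v, hv⟩ ihu ihv

section Evaluation

variable {R : Type*} [Monoid R] (r : A → R) (op : A → A → Function.End R)

/-- The state is the stack of pending calls, each with the value read before it, together with
the value of the current well-matched factor. -/
def evalStep (s : List (A × R) × R) (c : A) : List (A × R) × R :=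
  match VPAlphabet.kind c, s.1 with
  | .intern, _ => (s.1, s.2 * r c)
  | .call, _ => ((c, s.2) :: s.1, 1)
  | .ret, (a, t) :: P => (P, t * op a c s.2)
  | .ret, [] => s

def evalRun (w : List A) (s : List (A × R) × R) : List (A × R) × R :=
  w.foldl (evalStep r op) s

def evalAround (u v : List A) (s : List (A × R) × R) (z : R) : List (A × R) × R :=
  evalRun r op v ((evalRun r op u s).1, (evalRun r op u s).2 * z)

def ctxMap (u v : List A) : Function.End R := fun z => (evalAround r op u v ([], 1) z).2

variable {r op}

@[simp] theorem evalRun_nil (s : List (A × R) × R) : evalRun r op [] s = s := rfl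

theorem evalRun_append (w₁ w₂ : List A) (s : List (A × R) × R) :
    evalRun r op (w₁ ++ w₂) s = evalRun r op w₂ (evalRun r op w₁ s) :=
  List.foldl_append

theorem evalRun_intern {c : A} (hc : VPAlphabet.kind c = VPKind.intern) (P : List (A × R))
    (t : R) : evalRun r op [c] (P, t) = (P, t * r c) := by
  simp [evalRun, evalStep, hc]

theorem evalRun_call {a : A} (ha : VPAlphabet.kind a = VPKind.call) (w : List A)
    (P : List (A × R)) (t : R) :
    evalRun r op (a :: w) (P, t) = evalRun r op w ((a, t) :: P, 1) := by
  simp [evalRun, evalStep, ha]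

theorem evalRun_ret {b : A} (hb : VPAlphabet.kind b = VPKind.ret) (a : A) (P : List (A × R))
    (t z : R) : evalRun r op [b] ((a, t) :: P, z) = (P, t * op a b z) := by
  simp [evalRun, evalStep, hb]

theorem exists_evalRun_eq {w : List A} (hw : WellMatched w) :
    ∃ m : R, ∀ P t, evalRun r op w (P, t) = (P, t * m) := by
  induction hw with
  | nil => exact ⟨1, fun P t => by simp⟩
  | intern c hc => exact ⟨r c, evalRun_intern hc⟩
  | ext a b w ha hb _ ih =>
    obtain ⟨m, hm⟩ := ih
    exact ⟨op a b (1 * m), fun P t => by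
      rw [evalRun_append, evalRun_call ha, hm, evalRun_ret hb]⟩
  | append u v _ _ ihu ihv =>
    obtain ⟨mu, hmu⟩ := ihu
    obtain ⟨mv, hmv⟩ := ihv
    exact ⟨mu * mv, fun P t => by rw [evalRun_append, hmu, hmv, mul_assoc]⟩

theorem evalRun_eq {w : List A} (hw : WellMatched w) (P : List (A × R)) (t : R) :
    evalRun r op w (P, t) = (P, t * (evalRun r op w ([], 1)).2) := by
  obtain ⟨m, hm⟩ := exists_evalRun_eq (r := r) (op := op) hw
  simp [hm]

theorem exists_evalAround_eq (ER : ExtAlgebra R) (hop : ∀ a b, op a b ∈ ER.O) {u v : List A}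
    (h : WellMatched (u ++ v)) :
    ∃ F ∈ ER.O, ∀ P t z, evalAround r op u v (P, t) z = (P, t * F z) := by
  refine WellMatched.context_induction ?_ ?_ ?_ ?_ h
  · exact ⟨1, ER.O.one_mem, fun P t z => rfl⟩
  · rintro w u v hw ⟨F, hF, hFeq⟩
    refine ⟨fun x => (evalRun r op w ([], 1)).2 * F x,
      mul_mem (ER.mulLeft_mem _) hF, fun P t z => ?_⟩
    rw [evalAround, evalRun_append, evalRun_eq hw P t, ← mul_assoc]
    exact hFeq _ _ z
  · rintro u v w hw ⟨F, hF, hFeq⟩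
    refine ⟨fun x => F x * (evalRun r op w ([], 1)).2,
      mul_mem (ER.mulRight_mem _) hF, fun P t z => ?_⟩
    simp only [evalAround, evalRun_append] at hFeq ⊢
    rw [hFeq, evalRun_eq hw, mul_assoc]
  · rintro a b u v ha hb ⟨F, hF, hFeq⟩
    refine ⟨op a b * F, mul_mem (hop a b) hF, fun P t z => ?_⟩
    simp only [evalAround, evalRun_append, evalRun_call ha] at hFeq ⊢
    rw [hFeq, evalRun_ret hb, one_mul]
    rfl

theorem ctxMap_spec {ER : ExtAlgebra R} (hop : ∀ a b, op a b ∈ ER.O) {u v : List A}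
    (h : WellMatched (u ++ v)) : ctxMap r op u v ∈ ER.O ∧
      ∀ P t z, evalAround r op u v (P, t) z = (P, t * ctxMap r op u v z) := by
  obtain ⟨F, hF, hFeq⟩ := exists_evalAround_eq (r := r) ER hop h
  have hctx : ctxMap r op u v = F := funext fun z => by simp [ctxMap, hFeq]
  exact hctx ▸ ⟨hF, hFeq⟩

variable (r op) in
def evalMonoidHom : WM A →* R where
  toFun x := (evalRun r op x.1 ([], 1)).2
  map_one' := rfl
  map_mul' x y := by
    show (evalRun r op (x.1 ++ y.1) ([], 1)).2 = _
    rw [evalRun_append, evalRun_eq x.2, evalRun_eq y.2]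

theorem evalRun_eq_evalMonoidHom (x : WM A) (s : List (A × R) × R) :
    evalRun r op x.1 s = (s.1, s.2 * evalMonoidHom r op x) :=
  evalRun_eq x.2 s.1 s.2

end Evaluation

/-- `WM A` is the free `Ext`-algebra on the internal letters and the pairs (call, return):
any choice of their images extends to a morphism. -/
def ExtHomWM.ofGenerators {R : Type*} [Monoid R] (ER : ExtAlgebra R) (r : A → R)
    (e : A → A → ER.O) : ExtHomWM A ER where
  toMonoidHom := evalMonoidHom r fun a b => e a b
  op u v h := ⟨ctxMap r (fun a b => e a b) u v, (ctxMap_spec (fun a b => (e a b).2) h).1⟩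
  op_one := Subtype.ext <| funext fun z => by simp [ctxMap, evalAround]; rfl
  op_comp u v h u' v' h' h'' := Subtype.ext <| funext fun z => by
    have hinner := (ctxMap_spec (r := r) (fun a b => (e a b).2) h').2
      (evalRun r (fun a b => e a b) u ([], 1)).1 (evalRun r (fun a b => e a b) u ([], 1)).2 z
    simp only [evalAround, Prod.mk.eta] at hinner
    show ctxMap _ _ _ _ z = ctxMap _ _ u v (ctxMap _ _ u' v' z)
    simp only [ctxMap, evalAround, evalRun_append, hinner]
  op_spec u v h x := by
    show _ = (evalRun _ _ (u ++ x.1 ++ v) ([], 1)).2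
    rw [evalRun_append, evalRun_append, evalRun_eq_evalMonoidHom x]
    rfl

namespace ExtHomWM

theorem ofGenerators_apply_intern {R : Type*} [Monoid R] (ER : ExtAlgebra R) (r : A → R)
    (e : A → A → ER.O) {c : A} (hc : VPAlphabet.kind c = VPKind.intern) :
    (ofGenerators ER r e).toMonoidHom ⟨[c], .intern c hc⟩ = r c := by
  show (evalRun _ _ [c] ([], 1)).2 = r c
  rw [evalRun_intern hc, one_mul]

theorem ofGenerators_op_call_ret {R : Type*} [Monoid R] (ER : ExtAlgebra R) (r : A → R)
    (e : A → A → ER.O) {a b : A} (ha : VPAlphabet.kind a = VPKind.call)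
    (hb : VPAlphabet.kind b = VPKind.ret) (h : WellMatched ([a] ++ [b])) :
    (ofGenerators ER r e).op [a] [b] h = e a b :=
  Subtype.ext <| funext fun z => by
    show ctxMap _ _ [a] [b] z = _
    simp [ctxMap, evalAround, evalRun_call ha, evalRun_ret hb]

variable {R S : Type*} [Monoid R] [Monoid S] {ER : ExtAlgebra R} {ES : ExtAlgebra S}

theorem rel_of_generators (φ : ExtHomWM A ER) (χ : ExtHomWM A ES) (ρ : R → S → Prop)
    (one : ρ 1 1) (mul : ∀ {a b a' b'}, ρ a a' → ρ b b' → ρ (a * b) (a' * b'))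
    (intern : ∀ c (hc : VPAlphabet.kind c = VPKind.intern),
      ρ (φ.toMonoidHom ⟨[c], .intern c hc⟩) (χ.toMonoidHom ⟨[c], .intern c hc⟩))
    (call_ret : ∀ a b (h : WellMatched ([a] ++ [b])), VPAlphabet.kind a = VPKind.call →
      VPAlphabet.kind b = VPKind.ret → ∀ x y, ρ x y →
        ρ ((φ.op [a] [b] h : Function.End R) x) ((χ.op [a] [b] h : Function.End S) y))
    (x : WM A) : ρ (φ.toMonoidHom x) (χ.toMonoidHom x) := by
  induction x using WM.induction with
  | one => rw [map_one, map_one]; exact one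
  | intern c hc => exact intern c hc
  | ext a b ha hb x ih =>
    rw [← φ.op_spec, ← χ.op_spec]
    exact call_ret a b _ ha hb _ _ ih
  | mul x y hx hy => rw [map_mul, map_mul]; exact mul hx hy

theorem exists_rel (φ : ExtHomWM A ER) (ES : ExtAlgebra S) (ρ : R → S → Prop)
    (one : ρ 1 1) (mul : ∀ {a b a' b'}, ρ a a' → ρ b b' → ρ (a * b) (a' * b'))
    (intern : ∀ c (hc : VPAlphabet.kind c = VPKind.intern),
      ∃ s, ρ (φ.toMonoidHom ⟨[c], .intern c hc⟩) s)
    (call_ret : ∀ a b (h : WellMatched ([a] ++ [b])), VPAlphabet.kind a = VPKind.call →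
      VPAlphabet.kind b = VPKind.ret →
        ∃ g ∈ ES.O, ∀ x y, ρ x y → ρ ((φ.op [a] [b] h : Function.End R) x) (g y)) :
    ∃ χ : ExtHomWM A ES, ∀ x, ρ (φ.toMonoidHom x) (χ.toMonoidHom x) := by
  classical
  choose r hr using intern
  choose g hgO hg using call_ret
  let χ := ofGenerators ES (fun c => if hc : VPAlphabet.kind c = VPKind.intern then r c hc else 1)
    fun a b => if hab : VPAlphabet.kind a = VPKind.call ∧ VPAlphabet.kind b = VPKind.ret then
      ⟨g a b (.ext a b [] hab.1 hab.2 .nil) hab.1 hab.2, hgO ..⟩ else 1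
  refine ⟨χ, rel_of_generators φ χ ρ one mul (fun c hc => ?_) fun a b h ha hb => ?_⟩
  · rw [ofGenerators_apply_intern _ _ _ hc, dif_pos hc]
    exact hr c hc
  · rw [ofGenerators_op_call_ret _ _ _ ha hb, dif_pos ⟨ha, hb⟩]
    exact hg a b h ha hb

end ExtHomWM

theorem SepBound.mono {m n : ℕ} {x y : WM A} (h : SepBound m x y) (hmn : m ≤ n) :
    SepBound n x y :=
  let ⟨R, φ, hcard, hne⟩ := h
  ⟨R, φ, hcard.trans hmn, hne⟩

theorem WM.dist_eq_of_ne [Finite A] {x y : WM A} (h : x ≠ y) :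
    dist x y = (2 : ℝ)⁻¹ ^ sepDeg x y :=
  if_neg h

theorem WM.le_dist_of_sepBound [Finite A] {n : ℕ} {x y : WM A} (h : SepBound n x y) :
    (2 : ℝ)⁻¹ ^ n ≤ dist x y := by
  obtain ⟨_, φ, _, hne⟩ := id h
  rw [dist_eq_of_ne fun hxy => hne (congrArg _ hxy)]
  exact pow_le_pow_of_le_one (by norm_num) (by norm_num) (Nat.sInf_le h)

theorem WM.dist_lt_of_not_sepBound [Finite A] {n : ℕ} {x y : WM A} (h : ¬ SepBound n x y) :
    dist x y < (2 : ℝ)⁻¹ ^ n := by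
  rcases eq_or_ne x y with rfl | hxy
  · simp
  have hdeg : n < sepDeg x y := by
    by_contra! hle
    exact h (SepBound.mono (Nat.sInf_mem (exists_sepBound hxy)) hle)
  rw [dist_eq_of_ne hxy]
  exact pow_lt_pow_right_of_lt_one₀ (by norm_num) (by norm_num) hdeg

open UniformSpace

namespace ExtHomWM

variable [Finite A] {R : Type} [Monoid R] {ER : ExtAlgebra R}

noncomputable def extend (φ : ExtHomWM A ER) : Completion (WM A) → R :=
  letI : UniformSpace R := ⊥
  Completion.extension φ.toMonoidHom

theorem continuous_extend (φ : ExtHomWM A ER) : @Continuous _ _ _ ⊥ φ.extend :=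
  letI : UniformSpace R := ⊥
  Completion.continuous_extension

theorem uniformContinuous [Finite R] (φ : ExtHomWM A ER) :
    @UniformContinuous _ _ _ ⊥ φ.toMonoidHom := by
  let : UniformSpace R := ⊥
  rw [UniformContinuous, bot_uniformity, Filter.tendsto_principal]
  filter_upwards [Metric.dist_mem_uniformity
    (show (0 : ℝ) < 2⁻¹ ^ Nat.card R by positivity)] with p hp
  by_contra hne
  exact (WM.le_dist_of_sepBound ⟨⟨R, ER⟩, φ, le_rfl, hne⟩).not_gt hp

theorem extend_coe [Finite R] (φ : ExtHomWM A ER) (x : WM A) :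
    φ.extend x = φ.toMonoidHom x :=
  letI : UniformSpace R := ⊥
  haveI : DiscreteTopology R := ⟨rfl⟩
  Completion.extension_coe φ.uniformContinuous x

theorem eq_extend [Finite R] (φ : ExtHomWM A ER) {ψ : Completion (WM A) → R}
    (hψ : @Continuous _ _ _ ⊥ ψ) (h : ∀ x : WM A, ψ x = φ.toMonoidHom x) : ψ = φ.extend := by
  let : TopologicalSpace R := ⊥
  have : DiscreteTopology R := ⟨rfl⟩
  refine Continuous.ext_on Completion.denseRange_coe hψ φ.continuous_extend ?_
  rintro _ ⟨x, rfl⟩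
  rw [h, extend_coe]

theorem comp_extend {S : Type} [Monoid S] {ES : ExtAlgebra S} [Finite R] [Finite S]
    (φ : ExtHomWM A ER) (χ : ExtHomWM A ES) (f : R → S)
    (h : ∀ x, f (φ.toMonoidHom x) = χ.toMonoidHom x) : f ∘ φ.extend = χ.extend := by
  refine χ.eq_extend ?_ fun x => by simp [extend_coe, h]
  let : TopologicalSpace R := ⊥
  let : TopologicalSpace S := ⊥
  exact continuous_bot.comp φ.continuous_extend

end ExtHomWM

/-- What remains of a morphism `WM A → R` after embedding `R` into `Fin n`: the multiplication
table and the images of the generators, which determine the morphism. -/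
structure FinTable (A : Type) (n : ℕ) where
  mul : Fin n → Fin n → Fin n
  one : Fin n
  letter : A → Fin n
  act : A → A → Fin n → Fin n

instance [Finite A] (n : ℕ) : Finite (FinTable A n) :=
  Finite.of_injective (fun d : FinTable A n => (d.mul, d.one, d.letter, d.act)) fun d d' h => by
    cases d; cases d'; simp_all

namespace FinTable

variable {n : ℕ} {R : Type} [Monoid R] {ER : ExtAlgebra R}

def Realizes (d : FinTable A n) (φ : ExtHomWM A ER) (ι : R → Fin n) : Prop :=
  (∀ a b, ι (a * b) = d.mul (ι a) (ι b)) ∧ ι 1 = d.one ∧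
    (∀ c (hc : VPAlphabet.kind c = VPKind.intern),
      ι (φ.toMonoidHom ⟨[c], .intern c hc⟩) = d.letter c) ∧
    ∀ a b (h : WellMatched ([a] ++ [b])), VPAlphabet.kind a = VPKind.call →
      VPAlphabet.kind b = VPKind.ret →
        ∀ z, ι ((φ.op [a] [b] h : Function.End R) z) = d.act a b (ι z)

theorem Realizes.apply_eq {d : FinTable A n} {φ : ExtHomWM A ER} {ι : R → Fin n}
    {S : Type} [Monoid S] {ES : ExtAlgebra S} {χ : ExtHomWM A ES} {κ : S → Fin n}
    (hφ : d.Realizes φ ι) (hχ : d.Realizes χ κ) (x : WM A) :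
    ι (φ.toMonoidHom x) = κ (χ.toMonoidHom x) := by
  obtain ⟨hmul, hone, hletter, hact⟩ := hφ
  obtain ⟨hmul', hone', hletter', hact'⟩ := hχ
  refine φ.rel_of_generators χ (fun a b => ι a = κ b) (hone.trans hone'.symm)
    (fun ha hb => ?_) (fun c hc => (hletter c hc).trans (hletter' c hc).symm)
    (fun a b h ha hb x y hxy => ?_) x
  · rw [hmul, hmul', ha, hb]
  · rw [hact a b h ha hb, hact' a b h ha hb, hxy]

theorem exists_realizes [Finite R] (φ : ExtHomWM A ER) {ι : R → Fin n}
    (hι : Function.Injective ι) : ∃ d : FinTable A n, d.Realizes φ ι := by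
  classical
  have hinv := Function.leftInverse_invFun hι
  refine ⟨⟨fun i j => ι (Function.invFun ι i * Function.invFun ι j), ι 1,
    fun c => if hc : VPAlphabet.kind c = VPKind.intern then
      ι (φ.toMonoidHom ⟨[c], .intern c hc⟩) else ι 1,
    fun a b z => if hab : VPAlphabet.kind a = VPKind.call ∧ VPAlphabet.kind b = VPKind.ret then
      ι ((φ.op [a] [b] (.ext a b [] hab.1 hab.2 .nil) : Function.End R) (Function.invFun ι z))
      else z⟩,
    fun a b => by simp only [hinv _], rfl, fun c hc => by simp only [dif_pos hc],
    fun a b h ha hb z => by simp only [dif_pos (And.intro ha hb), hinv _]⟩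

end FinTable

/-- Takes only finitely many values: this is what makes `WM A` totally bounded. -/
def WM.sepClass (n : ℕ) (x : WM A) : FinTable A n → Set (Fin n) := fun d =>
  {i | ∃ (R : BExt) (φ : ExtHomWM A R.ext) (ι : R.carrier → Fin n),
    d.Realizes φ ι ∧ ι (φ.toMonoidHom x) = i}

theorem WM.not_sepBound_of_sepClass_eq {n : ℕ} {x y : WM A} (h : sepClass n x = sepClass n y) :
    ¬ SepBound n x y := by
  rintro ⟨R, φ, hcard, hne⟩
  let ι : R.carrier → Fin n := Fin.castLE hcard ∘ Finite.equivFin R.carrier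
  have hι : Function.Injective ι := (Fin.castLE_injective hcard).comp (Equiv.injective _)
  obtain ⟨d, hd⟩ := FinTable.exists_realizes φ hι
  have hx : ι (φ.toMonoidHom x) ∈ sepClass n y d := h ▸ ⟨R, φ, ι, hd, rfl⟩
  obtain ⟨R', φ', ι', hd', hy⟩ := hx
  exact hne (hι (hy ▸ hd.apply_eq hd' y).symm)

theorem WM.totallyBounded_univ [Finite A] : TotallyBounded (Set.univ : Set (WM A)) := by
  refine Metric.totallyBounded_of_finite_discretization fun ε hε => ?_
  obtain ⟨n, hn⟩ := exists_pow_lt_of_lt_one hε (by norm_num : (2 : ℝ)⁻¹ < 1)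
  exact ⟨_, Fintype.ofFinite (FinTable A n → Set (Fin n)), fun x => sepClass n x.1,
    fun x y h => (dist_lt_of_not_sepBound (not_sepBound_of_sepClass_eq h)).trans hn⟩

instance [Finite A] : CompactSpace (Completion (WM A)) := by
  rw [← isCompact_univ_iff, isCompact_iff_totallyBounded_isComplete,
    ← Completion.denseRange_coe.closure_range, ← Set.image_univ]
  exact ⟨(WM.totallyBounded_univ.image (Completion.uniformContinuous_coe _)).closure,
    isClosed_closure.isComplete⟩

theorem satisfiesEqs_iff (R : BExt) (E : EqSet) :
    SatisfiesEqs R E ↔ ∀ (B : Type) [VPAlphabet B] [Finite B], ∀ p ∈ E.eqs B,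
      ∀ φ : ExtHomWM B R.ext, φ.extend p.1 = φ.extend p.2 := by
  refine ⟨fun h B _ _ p hp φ => h B p hp φ _ ⟨φ.continuous_extend, φ.extend_coe⟩,
    fun h B _ _ p hp φ ψ ⟨hψ, hψφ⟩ => ?_⟩
  rw [φ.eq_extend hψ hψφ]
  exact h B p hp φ

theorem SatisfiesEqs.of_isQuotientOf {E : EqSet} {R S : BExt} (hS : SatisfiesEqs S E)
    (hq : IsQuotientOf R.ext S.ext) : SatisfiesEqs R E := by
  obtain ⟨h, hsurj, hopsurj⟩ := hq
  refine (satisfiesEqs_iff R E).2 fun B _ _ p hp φ => ?_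
  obtain ⟨χ, hχ⟩ := φ.exists_rel S.ext (fun r s => h.toMonoidHom s = r) (map_one _)
    (fun ha hb => by rw [map_mul, ha, hb]) (fun c _ => hsurj _) fun a b hab _ _ =>
      let ⟨G, hG⟩ := hopsurj (φ.op [a] [b] hab)
      ⟨G, G.2, fun x y hxy => by rw [← h.compat, hG, hxy]⟩
  rw [← χ.comp_extend φ h.toMonoidHom hχ]
  exact congrArg h.toMonoidHom ((satisfiesEqs_iff S E).1 hS B p hp χ)

theorem SatisfiesEqs.subExt {E : EqSet} {S : BExt} (hS : SatisfiesEqs S E) (T : SubExt S.ext) :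
    SatisfiesEqs { carrier := T.carrier, ext := T.toExtAlgebra } E := by
  refine (satisfiesEqs_iff _ E).2 fun B _ _ p hp φ => ?_
  obtain ⟨χ, hχ⟩ := φ.exists_rel S.ext (fun t s => (t : S.carrier) = s) rfl
    (fun ha hb => by rw [Submonoid.coe_mul, ha, hb]) (fun c _ => ⟨_, rfl⟩) fun a b hab _ _ =>
      let ⟨f, hf, hfe⟩ := (φ.op [a] [b] hab).2
      ⟨f, T.ops_le hf, fun x y hxy => by rw [hfe, hxy]⟩
  have := (satisfiesEqs_iff S E).1 hS B p hp χ
  rw [← φ.comp_extend χ Subtype.val hχ] at this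
  exact Subtype.ext this

theorem exists_prodMap_of_mem_prodExt {R S : Type*} [Monoid R] [Monoid S] {ER : ExtAlgebra R}
    {ES : ExtAlgebra S} {e : Function.End (R × S)} (he : e ∈ (prodExt ER ES).O) :
    ∃ f ∈ ER.O, ∃ g ∈ ES.O, ∀ p : R × S, e p = (f p.1, g p.2) := by
  induction he using Submonoid.closure_induction with
  | mem e he =>
    rcases he with ⟨f, hf, hfe⟩ | ⟨g, hg, hge⟩
    · exact ⟨f, hf, 1, ES.O.one_mem, hfe⟩
    · exact ⟨1, ER.O.one_mem, g, hg, hge⟩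
  | one => exact ⟨1, ER.O.one_mem, 1, ES.O.one_mem, fun p => rfl⟩
  | mul e e' _ _ ih ih' =>
    obtain ⟨f, hf, g, hg, hfg⟩ := ih
    obtain ⟨f', hf', g', hg', hfg'⟩ := ih'
    refine ⟨f * f', mul_mem hf hf', g * g', mul_mem hg hg', fun p => ?_⟩
    show e (e' p) = _
    rw [hfg', hfg]
    rfl

theorem SatisfiesEqs.prod {E : EqSet} {R S : BExt} (hR : SatisfiesEqs R E)
    (hS : SatisfiesEqs S E) :
    SatisfiesEqs { carrier := R.carrier × S.carrier, ext := prodExt R.ext S.ext } E := by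
  refine (satisfiesEqs_iff _ E).2 fun B _ _ p hp φ => ?_
  obtain ⟨φ₁, h₁⟩ := φ.exists_rel R.ext (fun q r => q.1 = r) rfl
    (fun ha hb => by rw [Prod.fst_mul, ha, hb]) (fun c _ => ⟨_, rfl⟩) fun a b hab _ _ =>
      let ⟨f, hf, _, _, hfg⟩ := exists_prodMap_of_mem_prodExt (φ.op [a] [b] hab).2
      ⟨f, hf, fun x y hxy => by rw [hfg, hxy]⟩
  obtain ⟨φ₂, h₂⟩ := φ.exists_rel S.ext (fun q s => q.2 = s) rfl
    (fun ha hb => by rw [Prod.snd_mul, ha, hb]) (fun c _ => ⟨_, rfl⟩) fun a b hab _ _ =>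
      let ⟨_, _, g, hg, hfg⟩ := exists_prodMap_of_mem_prodExt (φ.op [a] [b] hab).2
      ⟨g, hg, fun x y hxy => by rw [hfg, hxy]⟩
  have e₁ := (satisfiesEqs_iff R E).1 hR B p hp φ₁
  have e₂ := (satisfiesEqs_iff S E).1 hS B p hp φ₂
  rw [← φ.comp_extend φ₁ Prod.fst h₁] at e₁
  rw [← φ.comp_extend φ₂ Prod.snd h₂] at e₂
  exact Prod.ext e₁ e₂

theorem isQuotientOf_of_surjective {R S : Type*} [Monoid R] [Monoid S] {ER : ExtAlgebra R}
    {ES : ExtAlgebra S} (h : S →* R) (hh : Function.Surjective h)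
    (descend : ∀ e ∈ ES.O, ∃ G ∈ ER.O, ∀ s, G (h s) = h (e s))
    (lift : ∀ G ∈ ER.O, ∃ e ∈ ES.O, ∀ s, G (h s) = h (e s)) : IsQuotientOf ER ES := by
  choose G hGO hG using fun e : ES.O => descend e e.2
  have ext_of_comp : ∀ G₁ G₂ : Function.End R, (∀ s, G₁ (h s) = G₂ (h s)) → G₁ = G₂ :=
    fun _ _ H => funext (hh.forall.2 H)
  let opMap : ES.O →* ER.O :=
    { toFun e := ⟨G e, hGO e⟩
      map_one' := Subtype.ext <| ext_of_comp _ _ fun s => hG 1 s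
      map_mul' e e' := Subtype.ext <| ext_of_comp _ _ fun s => by
        show G (e * e') (h s) = G e (G e' (h s))
        rw [hG, hG, hG]
        rfl }
  refine ⟨⟨h, opMap, fun e s => hG e s⟩, hh, fun G' => ?_⟩
  obtain ⟨e, he, heq⟩ := lift G' G'.2
  exact ⟨⟨e, he⟩, Subtype.ext <| ext_of_comp _ _ fun s => (hG _ s).trans (heq s).symm⟩

namespace ExtHomWM

variable {B : Type} [VPAlphabet B] {R S : Type*} [Monoid R] [Monoid S] {ER : ExtAlgebra R}
  {ES : ExtAlgebra S}

def compatibleOps (φ : ExtHomWM B ES) (φ₀ : ExtHomWM B ER) : Submonoid (Function.End S) where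
  carrier := {f | f ∈ ES.O ∧ ∃ g ∈ ER.O, ∀ x, ∃ y,
    f (φ.toMonoidHom x) = φ.toMonoidHom y ∧ g (φ₀.toMonoidHom x) = φ₀.toMonoidHom y}
  one_mem' := ⟨ES.O.one_mem, 1, ER.O.one_mem, fun x => ⟨x, rfl, rfl⟩⟩
  mul_mem' := by
    rintro f f' ⟨hf, g, hg, hfg⟩ ⟨hf', g', hg', hfg'⟩
    refine ⟨mul_mem hf hf', g * g', mul_mem hg hg', fun x => ?_⟩
    obtain ⟨y', hfy', hgy'⟩ := hfg' x
    obtain ⟨y, hfy, hgy⟩ := hfg y'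
    exact ⟨y, (congrArg f hfy').trans hfy, (congrArg g hgy').trans hgy⟩

theorem op_mem_compatibleOps (φ : ExtHomWM B ES) (φ₀ : ExtHomWM B ER) (u v : List B)
    (h : WellMatched (u ++ v)) : (φ.op u v h : Function.End S) ∈ compatibleOps φ φ₀ :=
  ⟨(φ.op u v h).2, φ₀.op u v h, (φ₀.op u v h).2,
    fun x => ⟨extWord u v h x, φ.op_spec u v h x, φ₀.op_spec u v h x⟩⟩

/-- Only the compatible operations are kept, so that each of them descends to `R`. -/
def imageSubExt (φ : ExtHomWM B ES) (φ₀ : ExtHomWM B ER) : SubExt ES where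
  carrier := MonoidHom.mrange φ.toMonoidHom
  ops := compatibleOps φ φ₀
  ops_le _ hf := hf.1
  maps_to f hf := by
    obtain ⟨-, _, -, hfg⟩ := hf
    rintro _ ⟨x, rfl⟩
    obtain ⟨y, hy, -⟩ := hfg x
    exact ⟨y, hy.symm⟩
  mulLeft_mem := by
    rintro _ ⟨w, rfl⟩
    exact ⟨ES.mulLeft_mem _, fun z => φ₀.toMonoidHom w * z, ER.mulLeft_mem _,
      fun x => ⟨w * x, (map_mul _ _ _).symm, (map_mul _ _ _).symm⟩⟩
  mulRight_mem := by
    rintro _ ⟨w, rfl⟩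
    exact ⟨ES.mulRight_mem _, fun z => z * φ₀.toMonoidHom w, ER.mulRight_mem _,
      fun x => ⟨x * w, (map_mul _ _ _).symm, (map_mul _ _ _).symm⟩⟩

theorem isQuotientOf_imageSubExt (φ : ExtHomWM B ES) (φ₀ : ExtHomWM B ER)
    (hker : ∀ x y, φ.toMonoidHom x = φ.toMonoidHom y → φ₀.toMonoidHom x = φ₀.toMonoidHom y)
    (hsurj : Function.Surjective φ₀.toMonoidHom)
    (hop : ∀ G ∈ ER.O, ∃ u v h, (φ₀.op u v h : Function.End R) = G) :
    IsQuotientOf ER (imageSubExt φ φ₀).toExtAlgebra := by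
  choose sec hsec using fun t : (imageSubExt φ φ₀).carrier => t.2
  let q : (imageSubExt φ φ₀).carrier →* R :=
    { toFun t := φ₀.toMonoidHom (sec t)
      map_one' := by
        rw [← map_one φ₀.toMonoidHom]
        exact hker _ _ (by rw [hsec, map_one]; rfl)
      map_mul' t t' := by
        rw [← map_mul]
        exact hker _ _ (by rw [hsec, map_mul, hsec, hsec]; rfl) }
  have q_apply : ∀ x, q ⟨φ.toMonoidHom x, x, rfl⟩ = φ₀.toMonoidHom x := fun x => hker _ _ (hsec _)
  refine isQuotientOf_of_surjective q (fun z => ?_) ?_ ?_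
  · obtain ⟨x, rfl⟩ := hsurj z
    exact ⟨_, q_apply x⟩
  · rintro e ⟨f, ⟨-, g, hg, hfg⟩, hfe⟩
    refine ⟨g, hg, ?_⟩
    rintro ⟨_, x, rfl⟩
    obtain ⟨y, hfy, hgy⟩ := hfg x
    have he : (e : Function.End _) ⟨φ.toMonoidHom x, x, rfl⟩ = ⟨φ.toMonoidHom y, y, rfl⟩ :=
      Subtype.ext ((hfe _).trans hfy)
    rw [he, q_apply, q_apply, hgy]
  · rintro G hG
    obtain ⟨u, v, huv, rfl⟩ := hop G hG
    let e : Function.End (imageSubExt φ φ₀).carrier := fun t =>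
      ⟨_, (imageSubExt φ φ₀).maps_to _ (op_mem_compatibleOps φ φ₀ u v huv) t t.2⟩
    refine ⟨e, ⟨_, op_mem_compatibleOps φ φ₀ u v huv, fun _ => rfl⟩, ?_⟩
    rintro ⟨_, x, rfl⟩
    have he : e ⟨φ.toMonoidHom x, x, rfl⟩ = ⟨_, extWord u v huv x, rfl⟩ :=
      Subtype.ext (φ.op_spec u v huv x)
    rw [he, q_apply, q_apply, φ₀.op_spec]

end ExtHomWM

namespace ExtAlgebra

variable {R : Type} [Monoid R] (ER : ExtAlgebra R)

def GenAlphabet : Type := R ⊕ ER.O ⊕ ER.O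

instance : VPAlphabet (GenAlphabet ER) :=
  ⟨Sum.elim (fun _ => .intern) (Sum.elim (fun _ => .call) fun _ => .ret)⟩

instance [Finite R] : Finite (GenAlphabet ER) :=
  have : Finite (Function.End R) := inferInstanceAs (Finite (R → R))
  inferInstanceAs (Finite (R ⊕ ER.O ⊕ ER.O))

def presentation : ExtHomWM (GenAlphabet ER) ER :=
  .ofGenerators ER (Sum.elim id 1) fun a _ => Sum.elim 1 (Sum.elim id 1) a

theorem presentation_surjective : Function.Surjective (presentation ER).toMonoidHom :=
  fun z => ⟨⟨[Sum.inl z], .intern _ rfl⟩, ExtHomWM.ofGenerators_apply_intern _ _ _ rfl⟩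

theorem presentation_op_surjective (G : Function.End R) (hG : G ∈ ER.O) :
    ∃ u v h, ((presentation ER).op u v h : Function.End R) = G :=
  ⟨[Sum.inr (Sum.inl ⟨G, hG⟩)], [Sum.inr (Sum.inr ⟨G, hG⟩)], .ext _ _ [] rfl rfl .nil,
    congrArg Subtype.val (ExtHomWM.ofGenerators_op_call_ret _ _ _ rfl rfl _)⟩

end ExtAlgebra

section Pair

variable {R S : Type*} [Monoid R] [Monoid S] {ER : ExtAlgebra R} {ES : ExtAlgebra S}

theorem prodMap_mem_prodExt {f : Function.End R} {g : Function.End S} (hf : f ∈ ER.O)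
    (hg : g ∈ ES.O) : (Prod.map f g : Function.End (R × S)) ∈ (prodExt ER ES).O := by
  have h₁ : (Prod.map f id : Function.End (R × S)) ∈ (prodExt ER ES).O :=
    Submonoid.subset_closure (Or.inl ⟨f, hf, fun _ => rfl⟩)
  have h₂ : (Prod.map id g : Function.End (R × S)) ∈ (prodExt ER ES).O :=
    Submonoid.subset_closure (Or.inr ⟨g, hg, fun _ => rfl⟩)
  exact mul_mem h₁ h₂

def ExtHomWM.pair (φ : ExtHomWM A ER) (χ : ExtHomWM A ES) : ExtHomWM A (prodExt ER ES) where
  toMonoidHom := φ.toMonoidHom.prod χ.toMonoidHom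
  op u v h := ⟨Prod.map (φ.op u v h : Function.End R) (χ.op u v h : Function.End S),
    prodMap_mem_prodExt (φ.op u v h).2 (χ.op u v h).2⟩
  op_one := Subtype.ext <| by
    simp only [φ.op_one, χ.op_one]
    rfl
  op_comp u v h u' v' h' h'' := Subtype.ext <| by
    simp only [φ.op_comp u v h u' v' h' h'', χ.op_comp u v h u' v' h' h'']
    rfl
  op_spec u v h x := Prod.ext (φ.op_spec u v h x) (χ.op_spec u v h x)

end Pair

theorem isClopen_setOf_ne {X Y : Type*} [TopologicalSpace X] {f : X → Y}
    (hf : @Continuous _ _ _ ⊥ f) : IsClopen {p : X × X | f p.1 ≠ f p.2} := by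
  let : TopologicalSpace Y := ⊥
  have : DiscreteTopology Y := ⟨rfl⟩
  exact (isClopen_discrete {q : Y × Y | q.1 ≠ q.2}).preimage
    ((hf.comp continuous_fst).prodMk (hf.comp continuous_snd))

namespace AlgVariety

def eqSet (V : AlgVariety) : EqSet :=
  ⟨fun B _ _ => {p | ∀ S, V.mem S → ∀ φ : ExtHomWM B S.ext, φ.extend p.1 = φ.extend p.2}⟩

theorem satisfiesEqs_eqSet (V : AlgVariety) {R : BExt} (hR : V.mem R) :
    SatisfiesEqs R V.eqSet :=
  (satisfiesEqs_iff R _).2 fun _ _ _ _ hp φ => hp R hR φ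

theorem exists_kernel_le (V : AlgVariety) {B : Type} [VPAlphabet B] [Finite B] {R : BExt}
    (φ₀ : ExtHomWM B R.ext) (h : ∀ p ∈ V.eqSet.eqs B, φ₀.extend p.1 = φ₀.extend p.2) :
    ∃ S, V.mem S ∧ ∃ φ : ExtHomWM B S.ext, ∀ x y,
      φ.toMonoidHom x = φ.toMonoidHom y → φ₀.toMonoidHom x = φ₀.toMonoidHom y := by
  let N : (Σ S : {S : BExt // V.mem S}, ExtHomWM B S.1.ext) → Set _ := fun i =>
    {p : Completion (WM B) × Completion (WM B) | i.2.extend p.1 ≠ i.2.extend p.2}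
  have hcover : {p | φ₀.extend p.1 ≠ φ₀.extend p.2} ⊆ ⋃ i, N i := by
    intro p hp
    have : p ∉ V.eqSet.eqs B := fun hpE => hp (h p hpE)
    simp only [eqSet, Set.mem_ofPred_eq, not_forall] at this
    obtain ⟨S, hS, φ, hφ⟩ := this
    exact Set.mem_iUnion.2 ⟨⟨⟨S, hS⟩, φ⟩, hφ⟩
  have : Nonempty (Σ S : {S : BExt // V.mem S}, ExtHomWM B S.1.ext) :=
    ⟨⟨⟨_, V.punit_mem⟩, .ofGenerators punitExt 1 1⟩⟩
  have hdir : Directed (· ⊆ ·) N := fun i j => by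
    refine ⟨⟨⟨_, V.prod_closed _ _ i.1.2 j.1.2⟩, i.2.pair j.2⟩, ?_, ?_⟩ <;>
      refine fun p hp heq => hp ?_
    · have hfst := congrFun ((i.2.pair j.2).comp_extend i.2 Prod.fst fun _ => rfl)
      exact (hfst p.1).symm.trans ((congrArg Prod.fst heq).trans (hfst p.2))
    · have hsnd := congrFun ((i.2.pair j.2).comp_extend j.2 Prod.snd fun _ => rfl)
      exact (hsnd p.1).symm.trans ((congrArg Prod.snd heq).trans (hsnd p.2))
  obtain ⟨i, hi⟩ := (isClopen_setOf_ne φ₀.continuous_extend).isClosed.isCompact.elim_directed_cover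
    N (fun i => (isClopen_setOf_ne i.2.continuous_extend).isOpen) hcover hdir
  refine ⟨i.1.1, i.1.2, i.2, fun x y hxy => ?_⟩
  by_contra hne
  exact hi (show ((x : Completion (WM B)), (y : Completion (WM B))) ∈ _ by
    simpa [ExtHomWM.extend_coe] using hne) (by simpa [ExtHomWM.extend_coe] using hxy)

theorem mem_iff_satisfiesEqs (V : AlgVariety) (R : BExt) : V.mem R ↔ SatisfiesEqs R V.eqSet := by
  refine ⟨V.satisfiesEqs_eqSet, fun hR => ?_⟩
  obtain ⟨S, hS, φ, hker⟩ := V.exists_kernel_le R.ext.presentation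
    fun p hp => (satisfiesEqs_iff R _).1 hR _ p hp _
  exact V.quot_closed R _ (V.sub_closed S _ hS) (φ.isQuotientOf_imageSubExt _ hker
    R.ext.presentation_surjective R.ext.presentation_op_surjective)

end AlgVariety

/-- Reiterman's theorem for `Ext`-algebras: equationally defined classes are
pseudo-varieties, and every pseudo-variety is defined by a set of profinite
equations. -/
theorem statement18 :
    (∀ E : EqSet,
      (∀ R S : BExt, SatisfiesEqs S E → IsQuotientOf R.ext S.ext → SatisfiesEqs R E) ∧
      (∀ (S : BExt) (T : SubExt S.ext), SatisfiesEqs S E →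
        SatisfiesEqs { carrier := T.carrier, ext := T.toExtAlgebra } E) ∧
      (∀ R S : BExt, SatisfiesEqs R E → SatisfiesEqs S E →
        SatisfiesEqs { carrier := R.carrier × S.carrier, ext := prodExt R.ext S.ext } E)) ∧
    (∀ V : AlgVariety, ∃ E : EqSet, ∀ R : BExt, V.mem R ↔ SatisfiesEqs R E) :=
  ⟨fun _ => ⟨fun _ _ hS hq => hS.of_isQuotientOf hq, fun _ T hS => hS.subExt T,
    fun _ _ hR hS => hR.prod hS⟩, fun V => ⟨V.eqSet, V.mem_iff_satisfiesEqs⟩⟩
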